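/- Let M ∈ ℝ^{n×m} be fixed and let (X_k, Y_k, R_k, S_k) be sequences of entrywise nonnegative matrices (X_k, R_k ∈ ℝ^{n×k}, Y_k, S_k ∈ ℝ^{k×m}) converging to (X̄, Ȳ, R̄, S̄). Suppose there are sequences μ_k → 0 and ε_k → 0 of nonnegative reals such that for every k: ‖(X_kY_k − M)Y_kᵀ − R_k‖_F ≤ ε_k, ‖X_kᵀ(X_kY_k − M) − S_k‖_F ≤ ε_k, |(R_k)_{ia}(X_k)_{ia} − μ_k| ≤ ε_k for all indices (i,a), and |(S_k)_{aj}(Y_k)_{aj} − μ_k| ≤ ε_k for all indices (a,j). Then the limit satisfies the KKT system of the NMF problem: R̄ = (X̄Ȳ − M)Ȳᵀ, S̄ = X̄ᵀ(X̄Ȳ − M), ⟨R̄, X̄⟩_F = 0, ⟨S̄, Ȳ⟩_F = 0, and X̄, Ȳ, R̄, S̄ are all entrywise nonnegative. -/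
import Mathlib
set_option maxHeartbeats 1000000


open Matrix Filter

lemma entry_tendsto {p q : ℕ} {A : ℕ → Matrix (Fin p) (Fin q) ℝ} {Ab : Matrix (Fin p) (Fin q) ℝ}
    (h : Tendsto A atTop (nhds Ab)) (i : Fin p) (j : Fin q) :
    Tendsto (fun t => A t i j) atTop (nhds (Ab i j)) :=
  tendsto_pi_nhds.mp (tendsto_pi_nhds.mp h i) j

lemma mat_lim_zero {p q : ℕ} (A : ℕ → Matrix (Fin p) (Fin q) ℝ) (Ab : Matrix (Fin p) (Fin q) ℝ)
    (hA : Tendsto A atTop (nhds Ab)) (ε : ℕ → ℝ) (hε : Tendsto ε atTop (nhds 0))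
    (hb : ∀ t, Real.sqrt (∑ i, ∑ j, (A t i j) ^ 2) ≤ ε t) : Ab = 0 := by
  ext i j
  have hsq : ∀ t, |A t i j| ≤ ε t := by
    intro t
    refine le_trans (Real.abs_le_sqrt ?_) (hb t)
    calc (A t i j) ^ 2 ≤ ∑ j', (A t i j') ^ 2 :=
          Finset.single_le_sum (f := fun j' => (A t i j') ^ 2) (fun j' _ => sq_nonneg _) (Finset.mem_univ j)
      _ ≤ ∑ i', ∑ j', (A t i' j') ^ 2 :=
          Finset.single_le_sum (f := fun i' => ∑ j', (A t i' j') ^ 2)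
            (fun i' _ => Finset.sum_nonneg fun j' _ => sq_nonneg _) (Finset.mem_univ i)
  have h0 : Tendsto (fun t => A t i j) atTop (nhds 0) :=
    squeeze_zero_norm (fun t => by simpa [Real.norm_eq_abs] using hsq t) hε
  simpa using tendsto_nhds_unique (entry_tendsto hA i j) h0

lemma prod_lim_zero {f g μ ε : ℕ → ℝ} {a b : ℝ}
    (hf : Tendsto f atTop (nhds a)) (hg : Tendsto g atTop (nhds b))
    (hμ : Tendsto μ atTop (nhds 0)) (hε : Tendsto ε atTop (nhds 0))
    (h : ∀ t, |f t * g t - μ t| ≤ ε t) : a * b = 0 := by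
  have h0 : Tendsto (fun t => (f t * g t - μ t) + μ t) atTop (nhds (0 + 0)) :=
    (squeeze_zero_norm (fun t => by simpa [Real.norm_eq_abs] using h t) hε).add hμ
  have h0' : Tendsto (fun t => f t * g t) atTop (nhds 0) := by simpa using h0
  exact tendsto_nhds_unique (hf.mul hg) h0'

/-- If nonnegative iterates `(X_t, Y_t, R_t, S_t)` converge to `(X̄, Ȳ, R̄, S̄)` while the
perturbed KKT residuals (with parameters `μ_t → 0`, tolerances `ε_t → 0`) vanish, then the
limit satisfies the KKT system of the NMF problem. -/
theorem perturbed_kkt_limit (n m k : ℕ) (M : Matrix (Fin n) (Fin m) ℝ)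
    (X R : ℕ → Matrix (Fin n) (Fin k) ℝ) (Y S : ℕ → Matrix (Fin k) (Fin m) ℝ)
    (Xb Rb : Matrix (Fin n) (Fin k) ℝ) (Yb Sb : Matrix (Fin k) (Fin m) ℝ)
    (hXnn : ∀ t i a, 0 ≤ X t i a) (hYnn : ∀ t a j, 0 ≤ Y t a j)
    (hRnn : ∀ t i a, 0 ≤ R t i a) (hSnn : ∀ t a j, 0 ≤ S t a j)
    (hXlim : Tendsto X atTop (nhds Xb)) (hYlim : Tendsto Y atTop (nhds Yb))
    (hRlim : Tendsto R atTop (nhds Rb)) (hSlim : Tendsto S atTop (nhds Sb))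
    (μ ε : ℕ → ℝ) (hμnn : ∀ t, 0 ≤ μ t) (hεnn : ∀ t, 0 ≤ ε t)
    (hμ : Tendsto μ atTop (nhds 0)) (hε : Tendsto ε atTop (nhds 0))
    (h1 : ∀ t, Real.sqrt (∑ i, ∑ a, ((X t * Y t - M) * (Y t)ᵀ - R t) i a ^ 2) ≤ ε t)
    (h2 : ∀ t, Real.sqrt (∑ a, ∑ j, ((X t)ᵀ * (X t * Y t - M) - S t) a j ^ 2) ≤ ε t)
    (h3 : ∀ t i a, |R t i a * X t i a - μ t| ≤ ε t)
    (h4 : ∀ t a j, |S t a j * Y t a j - μ t| ≤ ε t) :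
    Rb = (Xb * Yb - M) * Ybᵀ ∧
    Sb = Xbᵀ * (Xb * Yb - M) ∧
    (Rbᵀ * Xb).trace = 0 ∧
    (Sbᵀ * Yb).trace = 0 ∧
    (∀ i a, 0 ≤ Xb i a) ∧ (∀ a j, 0 ≤ Yb a j) ∧
    (∀ i a, 0 ≤ Rb i a) ∧ (∀ a j, 0 ≤ Sb a j) := by
  have hD1 : Tendsto (fun t => (X t * Y t - M) * (Y t)ᵀ - R t) atTop
      (nhds ((Xb * Yb - M) * Ybᵀ - Rb)) := by
    refine tendsto_pi_nhds.mpr fun i => tendsto_pi_nhds.mpr fun a => ?_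
    simp only [Matrix.sub_apply, Matrix.mul_apply, Matrix.transpose_apply]
    exact (tendsto_finset_sum _ fun j _ =>
      ((tendsto_finset_sum _ fun b _ =>
        (entry_tendsto hXlim i b).mul (entry_tendsto hYlim b j)).sub
        tendsto_const_nhds).mul (entry_tendsto hYlim a j)).sub (entry_tendsto hRlim i a)
  have hD2 : Tendsto (fun t => (X t)ᵀ * (X t * Y t - M) - S t) atTop
      (nhds (Xbᵀ * (Xb * Yb - M) - Sb)) := by
    refine tendsto_pi_nhds.mpr fun a => tendsto_pi_nhds.mpr fun j => ?_
    simp only [Matrix.sub_apply, Matrix.mul_apply, Matrix.transpose_apply]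
    exact (tendsto_finset_sum _ fun i _ =>
      (entry_tendsto hXlim i a).mul
      ((tendsto_finset_sum _ fun b _ =>
        (entry_tendsto hXlim i b).mul (entry_tendsto hYlim b j)).sub
        tendsto_const_nhds)).sub (entry_tendsto hSlim a j)
  have hR0 : (Xb * Yb - M) * Ybᵀ - Rb = 0 := mat_lim_zero _ _ hD1 ε hε h1
  have hS0 : Xbᵀ * (Xb * Yb - M) - Sb = 0 := mat_lim_zero _ _ hD2 ε hε h2
  have hRX : ∀ (i : Fin n) (a : Fin k), Rb i a * Xb i a = 0 := fun i a =>
    prod_lim_zero (entry_tendsto hRlim i a) (entry_tendsto hXlim i a) hμ hε fun t => h3 t i a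
  have hSY : ∀ (a : Fin k) (j : Fin m), Sb a j * Yb a j = 0 := fun a j =>
    prod_lim_zero (entry_tendsto hSlim a j) (entry_tendsto hYlim a j) hμ hε fun t => h4 t a j
  refine ⟨(sub_eq_zero.mp hR0).symm, (sub_eq_zero.mp hS0).symm, ?_, ?_, ?_, ?_, ?_, ?_⟩
  · rw [Matrix.trace]
    simp only [Matrix.diag, Matrix.mul_apply, Matrix.transpose_apply]
    exact Finset.sum_eq_zero fun a _ => Finset.sum_eq_zero fun i _ => hRX i a
  · rw [Matrix.trace]
    simp only [Matrix.diag, Matrix.mul_apply, Matrix.transpose_apply]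
    exact Finset.sum_eq_zero fun j _ => Finset.sum_eq_zero fun a _ => hSY a j
  · exact fun i a => ge_of_tendsto' (entry_tendsto hXlim i a) fun t => hXnn t i a
  · exact fun a j => ge_of_tendsto' (entry_tendsto hYlim a j) fun t => hYnn t a j
  · exact fun i a => ge_of_tendsto' (entry_tendsto hRlim i a) fun t => hRnn t i a
  · exact fun a j => ge_of_tendsto' (entry_tendsto hSlim a j) fun t => hSnn t a j
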